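/- Let G and H be connected nontrivial graphs with max{a'(G), a'(H)} > 1. Then a'(G □ H) ≤ a'(G) + a'(H). -/

import Mathlib

open SimpleGraph

/-- An edge colouring of `G` is proper if distinct edges sharing a vertex
receive distinct colours. -/
def IsProperEdgeColoring {V : Type*} {γ : Type*} (G : SimpleGraph V) (c : Sym2 V → γ) : Prop :=
  ∀ e₁ ∈ G.edgeSet, ∀ e₂ ∈ G.edgeSet, e₁ ≠ e₂ → (∃ v, v ∈ e₁ ∧ v ∈ e₂) → c e₁ ≠ c e₂

/-- The subgraph of `G` formed by the union of the colour classes `a` and `b`. -/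
def twoColourSubgraph {V : Type*} {γ : Type*} (G : SimpleGraph V) (c : Sym2 V → γ)
    (a b : γ) : SimpleGraph V where
  Adj x y := G.Adj x y ∧ (c s(x, y) = a ∨ c s(x, y) = b)
  symm := ⟨fun x y h => ⟨h.1.symm, by rw [Sym2.eq_swap]; exact h.2⟩⟩
  loopless := ⟨fun x h => G.loopless.1 x h.1⟩

/-- A proper edge colouring is acyclic if the union of any two colour classes
is a forest. -/
def IsAcyclicEdgeColoring {V : Type*} {γ : Type*} (G : SimpleGraph V) (c : Sym2 V → γ) : Prop :=
  IsProperEdgeColoring G c ∧ ∀ a b : γ, (twoColourSubgraph G c a b).IsAcyclic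

/-- The acyclic chromatic index `a'(G)`: the least number of colours in an
acyclic proper edge colouring of `G`. -/
noncomputable def acyclicChromaticIndex {V : Type*} (G : SimpleGraph V) : ℕ :=
  sInf { n | ∃ c : Sym2 V → Fin n, IsAcyclicEdgeColoring G c }

/-!
Colour the edges of `G □ H` along `G` by an optimal acyclic colouring of `G`, and the edges of
the copy `{g} × H` by an optimal acyclic colouring of `H` shifted by `σ g`, where `σ` is a proper
vertex colouring of `G` with `a'(H)` colours. A bicoloured cycle using two `G`-colours or two
`H`-colours stays in one copy of `G` or of `H`. A cycle alternating between a `G`-colour `a` and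
an `H`-colour `b` lives over an edge `g₀g₁` of `G` coloured `a` and projects to a cycle of `H` in
the two colour classes `b - σ g₀ ≠ b - σ g₁`.

It remains to see that `G` is `a'(H)`-colourable with `a'(H) ≥ 2`, or symmetrically. Since a
proper edge colouring uses at least `Δ` colours, greedy colouring reduces the failure of both to
`a'(G) = a'(H) = Δ(G)` with `G` regular (a connected non-regular graph is greedily
`Δ`-colourable). But in a `Δ`-regular graph coloured with `Δ` colours every vertex sees every
colour, so any two colour classes form a `2`-regular graph, which has a cycle.
-/

open scoped Finset

namespace SimpleGraph

variable {V : Type*} {G : SimpleGraph V}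

def HasTwoNeighborsIn (G : SimpleGraph V) (S : Finset V) : Prop :=
  ∀ x ∈ S, ∃ y ∈ S, ∃ z ∈ S, y ≠ z ∧ G.Adj x y ∧ G.Adj x z

lemma IsAcyclic.exists_isPath_of_hasTwoNeighborsIn (hG : G.IsAcyclic) {S : Finset V}
    (hS : G.HasTwoNeighborsIn S) (hne : S.Nonempty) (n : ℕ) :
    ∃ u v, ∃ p : G.Walk u v, p.IsPath ∧ p.length = n ∧ ∀ x ∈ p.support, x ∈ S := by
  induction n with
  | zero =>
    obtain ⟨u, hu⟩ := hne
    exact ⟨u, u, .nil, .nil, rfl, by simpa using hu⟩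
  | succ n ih =>
    obtain ⟨u, v, p, hp, hlen, hpS⟩ := ih
    obtain ⟨y, hy, z, hz, hyz, huy, huz⟩ := hS u (hpS u p.start_mem_support)
    -- one of the two neighbours of `u` avoids `p.snd`, hence avoids `p` since `G` is a forest
    obtain ⟨x, hx, hux, hxsnd⟩ : ∃ x ∈ S, G.Adj u x ∧ x ≠ p.snd := by
      by_cases h : y = p.snd
      · exact ⟨z, hz, huz, fun h' => hyz (h.trans h'.symm)⟩
      · exact ⟨y, hy, huy, h⟩
    have hxp : x ∉ p.support := fun h => hxsnd (hG.eq_snd_of_adj_start hp hux h)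
    refine ⟨x, v, .cons hux.symm p, hp.cons hxp, by simp [hlen], ?_⟩
    simp only [Walk.support_cons, List.mem_cons, forall_eq_or_imp]
    exact ⟨hx, hpS⟩

theorem isAcyclic_iff_forall_not_hasTwoNeighborsIn :
    G.IsAcyclic ↔ ∀ S : Finset V, S.Nonempty → ¬G.HasTwoNeighborsIn S := by
  classical
  constructor
  · intro hG S hne hS
    obtain ⟨u, v, p, hp, hlen, hpS⟩ := hG.exists_isPath_of_hasTwoNeighborsIn hS hne S.card
    have := Finset.card_le_card (s := p.support.toFinset) fun x hx => hpS x (by simpa using hx)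
    rw [List.toFinset_card_of_nodup hp.support_nodup, Walk.length_support] at this
    omega
  · intro h
    by_contra hcyc
    obtain ⟨u, p, hp⟩ : ∃ u, ∃ p : G.Walk u u, p.IsCycle := by
      simpa [IsAcyclic] using hcyc
    refine h p.support.toFinset ⟨u, by simp⟩ fun x hx => ?_
    rw [List.mem_toFinset] at hx
    obtain ⟨y, z, hyz, hN⟩ := Set.ncard_eq_two.mp (hp.ncard_neighborSet_toSubgraph_eq_two hx)
    have hadj : ∀ w ∈ p.toSubgraph.neighborSet x, w ∈ p.support.toFinset ∧ G.Adj x w :=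
      fun w hw => ⟨List.mem_toFinset.2 (p.mem_verts_toSubgraph.1 (p.toSubgraph.edge_vert hw.symm)),
        hw.adj_sub⟩
    obtain ⟨hy, hxy⟩ := hadj y (by simp [hN])
    obtain ⟨hz, hxz⟩ := hadj z (by simp [hN])
    exact ⟨y, hy, z, hz, hyz, hxy, hxz⟩

theorem isAcyclic_of_adj_imp_fiber {ι W : Type*} {M : SimpleGraph V} {κ : V → ι} {π : V → W}
    {T : ι → SimpleGraph W} (hT : ∀ i, (T i).IsAcyclic)
    (hinj : ∀ x y, κ x = κ y → π x = π y → x = y)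
    (hM : ∀ x y, M.Adj x y → κ x = κ y ∧ (T (κ x)).Adj (π x) (π y)) : M.IsAcyclic := by
  classical
  refine isAcyclic_iff_forall_not_hasTwoNeighborsIn.2 fun S ⟨x₀, hx₀⟩ hS => ?_
  set S₀ := S.filter (κ · = κ x₀)
  refine isAcyclic_iff_forall_not_hasTwoNeighborsIn.1 (hT (κ x₀)) (S₀.image π)
    ⟨π x₀, Finset.mem_image_of_mem _ (by simp [S₀, hx₀])⟩ ?_
  simp only [HasTwoNeighborsIn, Finset.forall_mem_image, Finset.exists_mem_image]
  intro x hx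
  obtain ⟨hxS, hxκ⟩ := Finset.mem_filter.1 hx
  obtain ⟨y, hy, z, hz, hyz, hxy, hxz⟩ := hS x hxS
  obtain ⟨hκy, hTy⟩ := hM x y hxy
  obtain ⟨hκz, hTz⟩ := hM x z hxz
  refine ⟨y, by simp [S₀, hy, ← hκy, hxκ], z, by simp [S₀, hz, ← hκz, hxκ],
    fun h => hyz (hinj y z (hκy.symm.trans hκz) h), ?_⟩
  rw [hxκ] at hTy hTz
  exact ⟨hTy, hTz⟩

section Greedy

variable (G) (ρ : V → ℕ) (n : ℕ)

noncomputable def greedyColor (v : V) : ℕ :=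
  sInf {i | i < n ∧ ∀ w, G.Adj v w → ρ w < ρ v → greedyColor w ≠ i}
termination_by ρ v

variable [Fintype V] [DecidableRel G.Adj] {G ρ n}

lemma greedyColor_spec (h : ∀ v, #{w ∈ G.neighborFinset v | ρ w < ρ v} < n) (v : V) :
    greedyColor G ρ n v < n ∧
      ∀ w, G.Adj v w → ρ w < ρ v → greedyColor G ρ n w ≠ greedyColor G ρ n v := by
  suffices greedyColor G ρ n v ∈
      {i | i < n ∧ ∀ w, G.Adj v w → ρ w < ρ v → greedyColor G ρ n w ≠ i} from this
  rw [greedyColor]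
  refine Nat.sInf_mem ?_
  obtain ⟨i, hi, hiu⟩ := Finset.exists_mem_notMem_of_card_lt_card
    ((Finset.card_image_le (f := greedyColor G ρ n)).trans_lt ((h v).trans_eq
      (Finset.card_range n).symm))
  refine ⟨i, Finset.mem_range.1 hi, fun w hvw hw hwi => hiu ?_⟩
  exact Finset.mem_image.2 ⟨w, by simp [hvw, hw], hwi⟩

theorem colorable_of_injective_of_card_lt (hρ : Function.Injective ρ)
    (h : ∀ v, #{w ∈ G.neighborFinset v | ρ w < ρ v} < n) : G.Colorable n := by
  refine ⟨Coloring.mk (fun v => ⟨greedyColor G ρ n v, (greedyColor_spec h v).1⟩) ?_⟩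
  intro u v huv heq
  rw [Fin.mk.injEq] at heq
  rcases lt_or_gt_of_ne (hρ.ne huv.ne) with hlt | hlt
  · exact (greedyColor_spec h v).2 u huv.symm hlt heq
  · exact (greedyColor_spec h u).2 v huv hlt heq.symm

end Greedy

lemma Connected.exists_adj_dist_lt (hG : G.Connected) {v₀ v : V} (hv : v ≠ v₀) :
    ∃ u, G.Adj v u ∧ G.dist v₀ u < G.dist v₀ v := by
  obtain ⟨p, hp⟩ := hG.exists_walk_length_eq_dist v v₀
  cases p with
  | nil => exact absurd rfl hv
  | cons h q =>
    refine ⟨_, h, ?_⟩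
    have hq : G.dist v₀ _ ≤ q.length := dist_comm.trans_le (G.dist_le q)
    have hv : G.dist v₀ v = (Walk.cons h q).length := dist_comm.trans hp.symm
    rw [hv, Walk.length_cons]
    omega

variable [Fintype V] [DecidableRel G.Adj] {n : ℕ}

theorem colorable_of_forall_degree_lt (h : ∀ v, G.degree v < n) : G.Colorable n := by
  refine colorable_of_injective_of_card_lt
    (Fin.val_injective.comp (Fintype.equivFin V).injective) fun v => ?_
  exact (Finset.card_filter_le _ _).trans_lt (h v)

/-- Greedy colouring in order of decreasing distance from `v₀`: every other vertex has a
neighbour closer to `v₀`, which is coloured later. -/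
theorem Connected.colorable_of_degree_le_of_degree_lt (hG : G.Connected)
    (hdeg : ∀ v, G.degree v ≤ n) {v₀ : V} (hv₀ : G.degree v₀ < n) : G.Colorable n := by
  classical
  set d := fun v => G.dist v₀ v
  set D := Finset.univ.sup d
  set C := Fintype.card V
  set idx := fun v => (Fintype.equivFin V v : ℕ)
  have hidx : ∀ v, idx v < C := fun v => (Fintype.equivFin V v).isLt
  set ρ := fun v => (D - d v) * C + idx v
  have hρ : ∀ u v, d u < d v → ρ v < ρ u := by
    intro u v huv
    have hv : d v ≤ D := Finset.le_sup (Finset.mem_univ v)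
    calc ρ v < (D - d v) * C + C := by simp only [ρ]; linarith [hidx v]
      _ = (D - d v + 1) * C := by ring
      _ ≤ (D - d u) * C := Nat.mul_le_mul_right C (by omega)
      _ ≤ ρ u := Nat.le_add_right _ _
  have hρinj : Function.Injective ρ := by
    intro u v huv
    rcases lt_trichotomy (d u) (d v) with h | h | h
    · exact absurd huv (hρ u v h).ne'
    · simp only [ρ, h, Nat.add_left_cancel_iff] at huv
      exact (Fintype.equivFin V).injective (Fin.val_injective huv)
    · exact absurd huv (hρ v u h).ne
  refine colorable_of_injective_of_card_lt hρinj fun v => ?_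
  by_cases hv : v = v₀
  · subst hv
    exact (Finset.card_filter_le _ _).trans_lt hv₀
  obtain ⟨u, hvu, hu⟩ := hG.exists_adj_dist_lt hv
  calc #{w ∈ G.neighborFinset v | ρ w < ρ v} ≤ #((G.neighborFinset v).erase u) := by
        refine Finset.card_le_card fun w hw => ?_
        obtain ⟨hw, hwv⟩ := Finset.mem_filter.1 hw
        exact Finset.mem_erase.2 ⟨fun hwu => (hρ u v hu).not_gt (hwu ▸ hwv), hw⟩
    _ < G.degree v := Finset.card_erase_lt_of_mem ((G.mem_neighborFinset v u).2 hvu)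
    _ ≤ n := hdeg v

end SimpleGraph

section EdgeColoring

variable {V W γ γ' : Type*} {G : SimpleGraph V} {c : Sym2 V → γ}

lemma IsProperEdgeColoring.eq_of_adj_of_eq (hc : IsProperEdgeColoring G c) {v w w' : V}
    (hw : G.Adj v w) (hw' : G.Adj v w') (h : c s(v, w) = c s(v, w')) : w = w' := by
  by_contra hne
  exact hc _ hw _ hw' (fun he => hne (Sym2.congr_right.1 he))
    ⟨v, Sym2.mem_mk_left _ _, Sym2.mem_mk_left _ _⟩ h

lemma IsProperEdgeColoring.injective_neighborSet (hc : IsProperEdgeColoring G c) (v : V) :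
    Function.Injective fun w : G.neighborSet v => c s(v, w) :=
  fun w w' h => Subtype.ext (hc.eq_of_adj_of_eq w.2 w'.2 h)

lemma twoColourSubgraph_comm (c : Sym2 V → γ) (a b : γ) :
    twoColourSubgraph G c a b = twoColourSubgraph G c b a := by
  ext x y
  exact and_congr_right fun _ => or_comm

lemma twoColourSubgraph_equiv_comp (e : γ ≃ γ') (a b : γ') :
    twoColourSubgraph G (e ∘ c) a b = twoColourSubgraph G c (e.symm a) (e.symm b) := by
  ext x y
  simp only [twoColourSubgraph, Function.comp_apply, ← Equiv.eq_symm_apply]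

lemma IsAcyclicEdgeColoring.equiv_comp (hc : IsAcyclicEdgeColoring G c) (e : γ ≃ γ') :
    IsAcyclicEdgeColoring G (e ∘ c) := by
  refine ⟨fun e₁ h₁ e₂ h₂ hne hv h => hc.1 e₁ h₁ e₂ h₂ hne hv (e.injective h), fun a b => ?_⟩
  rw [twoColourSubgraph_equiv_comp]
  exact hc.2 _ _

lemma IsAcyclicEdgeColoring.comap {G' : SimpleGraph W} {c : Sym2 W → γ}
    (hc : IsAcyclicEdgeColoring G' c) (f : G ↪g G') : IsAcyclicEdgeColoring G (c ∘ Sym2.map f) := by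
  refine ⟨?_, fun a b => (hc.2 a b).comap
    (G := twoColourSubgraph G (c ∘ Sym2.map f) a b) (G' := twoColourSubgraph G' c a b)
    ⟨f, fun h => ⟨f.map_adj_iff.2 h.1, h.2⟩⟩ f.injective⟩
  rintro e₁ h₁ e₂ h₂ hne ⟨v, hv₁, hv₂⟩
  exact hc.1 _ (f.toHom.map_mem_edgeSet h₁) _ (f.toHom.map_mem_edgeSet h₂)
    (fun h => hne (Sym2.map.injective f.injective h))
    ⟨f v, Sym2.mem_map.2 ⟨v, hv₁, rfl⟩, Sym2.mem_map.2 ⟨v, hv₂, rfl⟩⟩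

lemma isAcyclicEdgeColoring_of_injective (hc : Function.Injective c) :
    IsAcyclicEdgeColoring G c := by
  classical
  refine ⟨fun e₁ _ e₂ _ hne _ h => hne (hc h), fun a b u p hp => ?_⟩
  -- a cycle has at least three distinct edges, but only two of them can get colour `a` or `b`
  have hsub : (p.edges.map c).toFinset ⊆ {a, b} := by
    intro i hi
    obtain ⟨e, he, rfl⟩ := List.mem_map.1 (List.mem_toFinset.1 hi)
    induction e using Sym2.ind with
    | _ x y => simpa using (p.edges_subset_edgeSet he).2
  have := Finset.card_le_card hsub
  rw [List.toFinset_card_of_nodup (hp.edges_nodup.map hc), List.length_map,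
    Walk.length_edges] at this
  have := Finset.card_le_two (a := a) (b := b)
  have := hp.three_le_length
  omega

section Finite

variable [Fintype V] [DecidableRel G.Adj]

lemma IsProperEdgeColoring.degree_le_card [Fintype γ] (hc : IsProperEdgeColoring G c) (v : V) :
    G.degree v ≤ Fintype.card γ := by
  rw [← card_neighborSet_eq_degree]
  exact Fintype.card_le_of_injective _ (hc.injective_neighborSet v)

lemma IsProperEdgeColoring.exists_adj_eq_of_degree_eq_card [Fintype γ]
    (hc : IsProperEdgeColoring G c) {v : V} (hv : G.degree v = Fintype.card γ) (i : γ) :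
    ∃ w, G.Adj v w ∧ c s(v, w) = i := by
  obtain ⟨⟨w, hw⟩, hwi⟩ := ((Fintype.bijective_iff_injective_and_card _).2
    ⟨hc.injective_neighborSet v, by rw [card_neighborSet_eq_degree, hv]⟩).2 i
  exact ⟨w, hw, hwi⟩

theorem not_isAcyclicEdgeColoring_of_isRegularOfDegree [Nonempty V] {n : ℕ}
    (hreg : G.IsRegularOfDegree n) (hn : 2 ≤ n) (c : Sym2 V → Fin n) :
    ¬IsAcyclicEdgeColoring G c := by
  intro hc
  let i₀ : Fin n := ⟨0, by omega⟩
  let i₁ : Fin n := ⟨1, by omega⟩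
  refine isAcyclic_iff_forall_not_hasTwoNeighborsIn.1 (hc.2 i₀ i₁) Finset.univ
    Finset.univ_nonempty fun v _ => ?_
  have hv : G.degree v = Fintype.card (Fin n) := by rw [hreg v, Fintype.card_fin]
  obtain ⟨y, hvy, hy⟩ := hc.1.exists_adj_eq_of_degree_eq_card hv i₀
  obtain ⟨z, hvz, hz⟩ := hc.1.exists_adj_eq_of_degree_eq_card hv i₁
  refine ⟨y, Finset.mem_univ _, z, Finset.mem_univ _, ?_, ⟨hvy, .inl hy⟩, ⟨hvz, .inr hz⟩⟩
  rintro rfl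
  exact absurd (hy.symm.trans hz) (by simp [i₀, i₁, Fin.ext_iff])

end Finite

lemma acyclicChromaticIndex_le_card [Fintype γ] (hc : IsAcyclicEdgeColoring G c) :
    acyclicChromaticIndex G ≤ Fintype.card γ :=
  Nat.sInf_le ⟨_, hc.equiv_comp (Fintype.equivFin γ)⟩

lemma exists_isAcyclicEdgeColoring_acyclicChromaticIndex [Finite V] (G : SimpleGraph V) :
    ∃ c : Sym2 V → Fin (acyclicChromaticIndex G), IsAcyclicEdgeColoring G c :=
  Nat.sInf_mem (s := {n | ∃ c : Sym2 V → Fin n, IsAcyclicEdgeColoring G c})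
    ⟨_, _, isAcyclicEdgeColoring_of_injective (Finite.equivFin (Sym2 V)).injective⟩

lemma acyclicChromaticIndex_le_of_embedding [Finite W] {G' : SimpleGraph W} (f : G ↪g G') :
    acyclicChromaticIndex G ≤ acyclicChromaticIndex G' := by
  obtain ⟨c, hc⟩ := exists_isAcyclicEdgeColoring_acyclicChromaticIndex G'
  simpa using acyclicChromaticIndex_le_card (hc.comap f)

end EdgeColoring

section BoxProduct

variable {α β γ A : Type*} [DecidableEq α] [AddGroup A] {G : SimpleGraph α} {H : SimpleGraph β}
  {cG : Sym2 α → γ} {cH : Sym2 β → A} {σ : α → A}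

variable (cG cH σ) in
def boxProdEdgeColoring : Sym2 (α × β) → γ ⊕ A :=
  Sym2.lift ⟨fun x y => if x.1 = y.1 then .inr (cH s(x.2, y.2) + σ x.1) else .inl (cG s(x.1, y.1)),
    fun x y => by by_cases h : x.1 = y.1 <;> simp [h, Ne.symm, Sym2.eq_swap]⟩

variable (cG cH σ) in
lemma boxProdEdgeColoring_of_adj {x y : α × β} (h : (G □ H).Adj x y) :
    (x.2 = y.2 ∧ G.Adj x.1 y.1 ∧ boxProdEdgeColoring cG cH σ s(x, y) = .inl (cG s(x.1, y.1))) ∨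
      (x.1 = y.1 ∧ H.Adj x.2 y.2 ∧
        boxProdEdgeColoring cG cH σ s(x, y) = .inr (cH s(x.2, y.2) + σ x.1)) := by
  rcases h with ⟨hG, h2⟩ | ⟨hH, h1⟩
  · exact .inl ⟨h2, hG, by simp [boxProdEdgeColoring, hG.ne]⟩
  · exact .inr ⟨h1, hH, by simp [boxProdEdgeColoring, h1]⟩

lemma isProperEdgeColoring_boxProd (hcG : IsProperEdgeColoring G cG)
    (hcH : IsProperEdgeColoring H cH) :
    IsProperEdgeColoring (G □ H) (boxProdEdgeColoring cG cH σ) := by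
  rintro e₁ he₁ e₂ he₂ hne ⟨v, hv₁, hv₂⟩ heq
  obtain ⟨w₁, rfl⟩ := Sym2.mem_iff_exists.1 hv₁
  obtain ⟨w₂, rfl⟩ := Sym2.mem_iff_exists.1 hv₂
  have hw : w₁ ≠ w₂ := fun h => hne (h ▸ rfl)
  rcases boxProdEdgeColoring_of_adj cG cH σ he₁ with ⟨h₁, hG₁, hc₁⟩ | ⟨h₁, hH₁, hc₁⟩ <;>
    rcases boxProdEdgeColoring_of_adj cG cH σ he₂ with ⟨h₂, hG₂, hc₂⟩ | ⟨h₂, hH₂, hc₂⟩ <;>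
    rw [hc₁, hc₂] at heq
  · exact hw (Prod.ext (hcG.eq_of_adj_of_eq hG₁ hG₂ (Sum.inl_injective heq)) (h₁.symm.trans h₂))
  · simp at heq
  · simp at heq
  · exact hw (Prod.ext (h₁.symm.trans h₂)
      (hcH.eq_of_adj_of_eq hH₁ hH₂ (add_right_cancel (Sum.inr_injective heq))))

lemma isAcyclic_twoColourSubgraph_boxProd_inl_inl
    (hcG : ∀ a b, (twoColourSubgraph G cG a b).IsAcyclic) (a b : γ) :
    (twoColourSubgraph (G □ H) (boxProdEdgeColoring cG cH σ) (.inl a) (.inl b)).IsAcyclic := by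
  refine isAcyclic_of_adj_imp_fiber (κ := Prod.snd) (π := Prod.fst)
    (T := fun _ => twoColourSubgraph G cG a b) (fun _ => hcG a b)
    (fun x y h₂ h₁ => Prod.ext h₁ h₂) ?_
  rintro x y ⟨hxy, hc⟩
  rcases boxProdEdgeColoring_of_adj cG cH σ hxy with ⟨h₂, hG, hcol⟩ | ⟨-, -, hcol⟩ <;>
    simp only [hcol, Sum.inl.injEq, reduceCtorEq, or_self] at hc
  exact ⟨h₂, hG, hc⟩

lemma isAcyclic_twoColourSubgraph_boxProd_inr_inr
    (hcH : ∀ a b, (twoColourSubgraph H cH a b).IsAcyclic) (a b : A) :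
    (twoColourSubgraph (G □ H) (boxProdEdgeColoring cG cH σ) (.inr a) (.inr b)).IsAcyclic := by
  refine isAcyclic_of_adj_imp_fiber (κ := Prod.fst) (π := Prod.snd)
    (T := fun g => twoColourSubgraph H cH (a - σ g) (b - σ g)) (fun _ => hcH _ _)
    (fun x y h₁ h₂ => Prod.ext h₁ h₂) ?_
  rintro x y ⟨hxy, hc⟩
  rcases boxProdEdgeColoring_of_adj cG cH σ hxy with ⟨-, -, hcol⟩ | ⟨h₁, hH, hcol⟩ <;>
    simp only [hcol, Sum.inr.injEq, reduceCtorEq, or_self, ← eq_sub_iff_add_eq] at hc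
  exact ⟨h₁, hH, hc⟩

variable {a : γ} {b : A}

lemma adj_of_twoColourSubgraph_boxProd_inl_inr {x y : α × β}
    (h : (twoColourSubgraph (G □ H) (boxProdEdgeColoring cG cH σ) (.inl a) (.inr b)).Adj x y) :
    (x.2 = y.2 ∧ G.Adj x.1 y.1 ∧ cG s(x.1, y.1) = a) ∨
      (x.1 = y.1 ∧ H.Adj x.2 y.2 ∧ cH s(x.2, y.2) + σ x.1 = b) := by
  obtain ⟨hxy, hc⟩ := h
  rcases boxProdEdgeColoring_of_adj cG cH σ hxy with ⟨h₂, hG, hcol⟩ | ⟨h₁, hH, hcol⟩ <;>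
    simp only [hcol, Sum.inl.injEq, Sum.inr.injEq, reduceCtorEq, or_false, false_or] at hc
  · exact .inl ⟨h₂, hG, hc⟩
  · exact .inr ⟨h₁, hH, hc⟩

/-- Two neighbours along `G` would both be joined to `x` by edges coloured `a`, and two along `H` by
edges coloured `b`. -/
lemma exists_adj_of_hasTwoNeighborsIn_twoColourSubgraph_boxProd
    (hcG : IsProperEdgeColoring G cG) (hcH : IsProperEdgeColoring H cH) {S : Finset (α × β)}
    (hS : HasTwoNeighborsIn
      (twoColourSubgraph (G □ H) (boxProdEdgeColoring cG cH σ) (.inl a) (.inr b)) S)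
    {x : α × β} (hx : x ∈ S) :
    (∃ g, (g, x.2) ∈ S ∧ G.Adj x.1 g ∧ cG s(x.1, g) = a) ∧
      ∃ h, (x.1, h) ∈ S ∧ H.Adj x.2 h ∧ cH s(x.2, h) + σ x.1 = b := by
  obtain ⟨y, hy, z, hz, hyz, hxy, hxz⟩ := hS x hx
  rcases adj_of_twoColourSubgraph_boxProd_inl_inr hxy with ⟨hy₂, hGy, hcy⟩ | ⟨hy₁, hHy, hcy⟩ <;>
    rcases adj_of_twoColourSubgraph_boxProd_inl_inr hxz with ⟨hz₂, hGz, hcz⟩ | ⟨hz₁, hHz, hcz⟩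
  · exact absurd (Prod.ext (hcG.eq_of_adj_of_eq hGy hGz (hcy.trans hcz.symm))
      (hy₂.symm.trans hz₂)) hyz
  · exact ⟨⟨y.1, by rwa [hy₂], hGy, hcy⟩, ⟨z.2, by rwa [hz₁], hHz, hcz⟩⟩
  · exact ⟨⟨z.1, by rwa [hz₂], hGz, hcz⟩, ⟨y.2, by rwa [hy₁], hHy, hcy⟩⟩
  · exact absurd (Prod.ext (hy₁.symm.trans hz₁)
      (hcH.eq_of_adj_of_eq hHy hHz (add_right_cancel (hcy.trans hcz.symm)))) hyz

/-- In a set `S` where every vertex has two neighbours, every vertex has one neighbour along `G`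
and one along `H`. For an edge `g₀g₁` coloured `a`, the part of `S` over `g₀` projects to such a
set of `H`, with a neighbour of colour `b - σ g₀` inside the copy over `g₀` and one of colour
`b - σ g₁` through the copy over `g₁`; these colours differ because `σ` is proper. -/
lemma isAcyclic_twoColourSubgraph_boxProd_inl_inr (hcG : IsProperEdgeColoring G cG)
    (hcH : IsAcyclicEdgeColoring H cH) (hσ : ∀ ⦃g g'⦄, G.Adj g g' → σ g ≠ σ g') (a : γ) (b : A) :
    (twoColourSubgraph (G □ H) (boxProdEdgeColoring cG cH σ) (.inl a) (.inr b)).IsAcyclic := by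
  refine isAcyclic_iff_forall_not_hasTwoNeighborsIn.2 fun S ⟨x₀, hx₀⟩ hS => ?_
  have hnbr := fun {x} (hx : x ∈ S) =>
    exists_adj_of_hasTwoNeighborsIn_twoColourSubgraph_boxProd hcG hcH.1 hS hx
  obtain ⟨g₁, -, hg, hga⟩ := (hnbr hx₀).1
  have hrung : ∀ {g g'}, G.Adj g g' → cG s(g, g') = a → ∀ {h}, (g, h) ∈ S → (g', h) ∈ S := by
    intro g g' hgg' hc h hgh
    obtain ⟨g'', hg''S, hg'', hc''⟩ := (hnbr hgh).1
    rwa [hcG.eq_of_adj_of_eq hgg' hg'' (hc.trans hc''.symm)]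
  let S' := S.preimage (Prod.mk x₀.1) (Prod.mk_right_injective x₀.1).injOn
  refine isAcyclic_iff_forall_not_hasTwoNeighborsIn.1 (hcH.2 (b - σ x₀.1) (b - σ g₁)) S'
    ⟨x₀.2, by simpa [S'] using hx₀⟩ fun h hh => ?_
  rw [Finset.mem_preimage] at hh
  obtain ⟨h', hh', hH', hc'⟩ := (hnbr hh).2
  obtain ⟨h'', hh'', hH'', hc''⟩ := (hnbr (hrung hg hga hh)).2
  refine ⟨h', by simpa [S'] using hh', h'',
    by simpa [S'] using hrung hg.symm (by rwa [Sym2.eq_swap]) hh'', ?_,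
    ⟨hH', .inl (eq_sub_of_add_eq hc')⟩, ⟨hH'', .inr (eq_sub_of_add_eq hc'')⟩⟩
  rintro rfl
  exact hσ hg (add_left_cancel (hc'.trans hc''.symm))

theorem isAcyclicEdgeColoring_boxProd (hcG : IsAcyclicEdgeColoring G cG)
    (hcH : IsAcyclicEdgeColoring H cH) (hσ : ∀ ⦃g g'⦄, G.Adj g g' → σ g ≠ σ g') :
    IsAcyclicEdgeColoring (G □ H) (boxProdEdgeColoring cG cH σ) := by
  refine ⟨isProperEdgeColoring_boxProd hcG.1 hcH.1, ?_⟩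
  rintro (a | a) (b | b)
  · exact isAcyclic_twoColourSubgraph_boxProd_inl_inl hcG.2 a b
  · exact isAcyclic_twoColourSubgraph_boxProd_inl_inr hcG.1 hcH hσ a b
  · rw [twoColourSubgraph_comm]
    exact isAcyclic_twoColourSubgraph_boxProd_inl_inr hcG.1 hcH hσ b a
  · exact isAcyclic_twoColourSubgraph_boxProd_inr_inr hcH.2 a b

end BoxProduct

theorem acyclicChromaticIndex_boxProd_le_of_colorable {α β : Type*} [Finite α] [Finite β]
    {G : SimpleGraph α} {H : SimpleGraph β} (hpos : 0 < acyclicChromaticIndex H)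
    (hG : G.Colorable (acyclicChromaticIndex H)) :
    acyclicChromaticIndex (G □ H) ≤ acyclicChromaticIndex G + acyclicChromaticIndex H := by
  classical
  have : NeZero (acyclicChromaticIndex H) := ⟨hpos.ne'⟩
  obtain ⟨cG, hcG⟩ := exists_isAcyclicEdgeColoring_acyclicChromaticIndex G
  obtain ⟨cH, hcH⟩ := exists_isAcyclicEdgeColoring_acyclicChromaticIndex H
  obtain ⟨σ⟩ := hG
  simpa using acyclicChromaticIndex_le_card
    (isAcyclicEdgeColoring_boxProd (σ := σ) hcG hcH fun _ _ h => σ.valid h)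

theorem SimpleGraph.Connected.colorable_acyclicChromaticIndex_or_colorable_acyclicChromaticIndex
    {α β : Type*} [Fintype α] [Fintype β] {G : SimpleGraph α} {H : SimpleGraph β}
    (hG : G.Connected) (hmax : 1 < max (acyclicChromaticIndex G) (acyclicChromaticIndex H)) :
    (2 ≤ acyclicChromaticIndex H ∧ G.Colorable (acyclicChromaticIndex H)) ∨
      (2 ≤ acyclicChromaticIndex G ∧ H.Colorable (acyclicChromaticIndex G)) := by
  classical
  set k := acyclicChromaticIndex G
  set l := acyclicChromaticIndex H
  by_contra! ⟨hA, hB⟩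
  obtain ⟨cG, hcG⟩ := exists_isAcyclicEdgeColoring_acyclicChromaticIndex G
  obtain ⟨cH, hcH⟩ := exists_isAcyclicEdgeColoring_acyclicChromaticIndex H
  have hdegG : ∀ v, G.degree v ≤ k := by simpa using hcG.1.degree_le_card
  have hG' : G.Colorable (k + 1) :=
    colorable_of_forall_degree_lt fun v => Nat.lt_succ_of_le (hdegG v)
  have hH' : H.Colorable (l + 1) :=
    colorable_of_forall_degree_lt fun v => Nat.lt_succ_of_le (by simpa using hcH.1.degree_le_card v)
  have hk : 2 ≤ k := by
    by_contra hk
    exact hA (by omega) (hG'.mono (by omega))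
  have hkl : k = l := by
    have : k ≤ l := by by_contra; exact hB hk (hH'.mono (by omega))
    have : l ≤ k := by by_contra; exact hA (by omega) (hG'.mono (by omega))
    omega
  have hreg : G.IsRegularOfDegree k := fun v => (hdegG v).eq_or_lt.resolve_right fun hv =>
    hA (hkl ▸ hk) (hkl ▸ hG.colorable_of_degree_le_of_degree_lt hdegG hv)
  have := hG.nonempty
  exact not_isAcyclicEdgeColoring_of_isRegularOfDegree hreg hk cG hcG

theorem acyclicChromaticIndex_boxProd_le_general {α β : Type*} [Fintype α] [Fintype β]
    (G : SimpleGraph α) (H : SimpleGraph β)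
    (hG : G.Connected)
    (hmax : 1 < max (acyclicChromaticIndex G) (acyclicChromaticIndex H)) :
    acyclicChromaticIndex (G □ H) ≤ acyclicChromaticIndex G + acyclicChromaticIndex H := by
  rcases hG.colorable_acyclicChromaticIndex_or_colorable_acyclicChromaticIndex hmax with
    ⟨hl, hGl⟩ | ⟨hk, hHk⟩
  · exact acyclicChromaticIndex_boxProd_le_of_colorable (by omega) hGl
  · calc acyclicChromaticIndex (G □ H) ≤ acyclicChromaticIndex (H □ G) :=
          acyclicChromaticIndex_le_of_embedding (boxProdComm G H).toEmbedding
      _ ≤ acyclicChromaticIndex H + acyclicChromaticIndex G :=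
          acyclicChromaticIndex_boxProd_le_of_colorable (by omega) hHk
      _ = acyclicChromaticIndex G + acyclicChromaticIndex H := add_comm _ _

/-- Main theorem: for connected nontrivial finite graphs `G` and `H` with
`max {a'(G), a'(H)} > 1`, we have `a'(G □ H) ≤ a'(G) + a'(H)`. -/
theorem acyclicChromaticIndex_boxProd_le {α β : Type*} [Fintype α] [Fintype β]
    [Nontrivial α] [Nontrivial β] (G : SimpleGraph α) (H : SimpleGraph β)
    (hG : G.Connected) (hH : H.Connected)
    (hmax : 1 < max (acyclicChromaticIndex G) (acyclicChromaticIndex H)) :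
    acyclicChromaticIndex (G □ H) ≤ acyclicChromaticIndex G + acyclicChromaticIndex H :=
  acyclicChromaticIndex_boxProd_le_general G H hG hmax
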